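/- The presented group on five generators x₁, x₂, x₃, x₄, x₅ with defining relations x₅x₄x₃x₂x₁ = e, x₄ = x₅, x₁x₂ = x₂x₁, (x₃x₅)² = (x₅x₃)², (x₂x₁x₂⁻¹)(x₅x₃x₅⁻¹) = (x₅x₃x₅⁻¹)(x₂x₁x₂⁻¹), x₂ = x₅x₃x₅⁻¹, x₁⁻¹x₂x₁ = x₄x₃x₄⁻¹, (x₂x₁x₂⁻¹x₅)² = (x₅x₂x₁x₂⁻¹)², (x₃x₄)² = (x₄x₃)², x₅ = x₂x₁⁻¹x₂⁻¹x₄x₂x₁x₂⁻¹ is isomorphic to the presented group ⟨a, b | (ab)² = (ba)²⟩. -/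
import Mathlib

namespace Stmt3

/-- Generators `x₁, …, x₅` of the free group, indexed by `0, …, 4`. -/
def x (i : Fin 5) : FreeGroup (Fin 5) := FreeGroup.of i

/-- The relators corresponding to the ten defining relations. -/
def rels : Set (FreeGroup (Fin 5)) :=
  { x 4 * x 3 * x 2 * x 1 * x 0,
    x 3 * (x 4)⁻¹,
    x 0 * x 1 * (x 1 * x 0)⁻¹,
    (x 2 * x 4) ^ 2 * ((x 4 * x 2) ^ 2)⁻¹,
    (x 1 * x 0 * (x 1)⁻¹) * (x 4 * x 2 * (x 4)⁻¹) *
      ((x 4 * x 2 * (x 4)⁻¹) * (x 1 * x 0 * (x 1)⁻¹))⁻¹,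
    x 1 * (x 4 * x 2 * (x 4)⁻¹)⁻¹,
    ((x 0)⁻¹ * x 1 * x 0) * (x 3 * x 2 * (x 3)⁻¹)⁻¹,
    (x 1 * x 0 * (x 1)⁻¹ * x 4) ^ 2 * ((x 4 * x 1 * x 0 * (x 1)⁻¹) ^ 2)⁻¹,
    (x 2 * x 3) ^ 2 * ((x 3 * x 2) ^ 2)⁻¹,
    x 4 * (x 1 * (x 0)⁻¹ * (x 1)⁻¹ * x 3 * x 1 * x 0 * (x 1)⁻¹)⁻¹ }

/-- The single relator `(ab)²((ba)²)⁻¹` of the presentation `⟨a, b | (ab)² = (ba)²⟩`. -/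
def rels' : Set (FreeGroup (Fin 2)) :=
  {(FreeGroup.of 0 * FreeGroup.of 1) ^ 2 * ((FreeGroup.of 1 * FreeGroup.of 0) ^ 2)⁻¹}

lemma mk_rel_eq_one {α : Type*} {rs : Set (FreeGroup α)} {r : FreeGroup α} (h : r ∈ rs) :
    PresentedGroup.mk rs r = 1 :=
  (QuotientGroup.eq_one_iff r).mpr (Subgroup.subset_normalClosure h)

@[simp] lemma mk_of {α : Type*} {rs : Set (FreeGroup α)} (i : α) :
    PresentedGroup.mk rs (FreeGroup.of i) = PresentedGroup.of i := rfl

lemma fin5_cases (i : Fin 5) : i = 0 ∨ i = 1 ∨ i = 2 ∨ i = 3 ∨ i = 4 := by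
  fin_cases i <;> simp

lemma fin2_cases (i : Fin 2) : i = 0 ∨ i = 1 := by
  fin_cases i <;> simp

noncomputable abbrev A : PresentedGroup rels' := PresentedGroup.of 0
noncomputable abbrev B : PresentedGroup rels' := PresentedGroup.of 1

/-- The images of the five generators in `⟨a, b | (ab)² = (ba)²⟩`. -/
noncomputable def f : Fin 5 → PresentedGroup rels'
  | 0 => B * A⁻¹ * B⁻¹ * A⁻¹ * B⁻¹ * B⁻¹
  | 1 => B * A * B⁻¹
  | 2 => A
  | 3 => B
  | 4 => B

/-- The images of `a, b` in the big presented group. -/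
noncomputable def g : Fin 2 → PresentedGroup rels
  | 0 => PresentedGroup.of 2
  | 1 => PresentedGroup.of 4

lemma hab : A * B * A * B = B * A * B * A := by
  have h : PresentedGroup.mk rels'
      ((FreeGroup.of 0 * FreeGroup.of 1) ^ 2 * ((FreeGroup.of 1 * FreeGroup.of 0) ^ 2)⁻¹) = 1 :=
    mk_rel_eq_one (by simp [rels'])
  simp only [sq, map_mul, map_inv, mk_of] at h
  rw [mul_inv_eq_one, ← mul_assoc, ← mul_assoc] at h
  exact h

lemma hf : ∀ r ∈ rels, FreeGroup.lift f r = 1 := by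
  intro r hr
  simp only [rels, Set.mem_insert_iff, Set.mem_singleton_iff] at hr
  rcases hr with rfl | rfl | rfl | rfl | rfl | rfl | rfl | rfl | rfl | rfl <;>
    simp only [x, sq, map_mul, map_inv, FreeGroup.lift_apply_of, f]
  · group
  · group
  · -- relator 3 : conjugate of r by a⁻¹b⁻¹a⁻¹
    trans ((A⁻¹*B⁻¹*A⁻¹) * (A*B*A*B) * ((B*A*B*A)⁻¹ * (A⁻¹*B⁻¹*A⁻¹)⁻¹))
    · group; try rw [zpow_two]
    · rw [hab]; group
  · -- relator 4 : the relation itself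
    trans ((A*B*A*B) * (B*A*B*A)⁻¹)
    · group; try rw [zpow_two]
    · rw [hab]; group
  · -- relator 5 : conjugate of r by b a b⁻¹ a⁻¹ b⁻¹ a⁻¹
    trans ((B*A*B⁻¹*A⁻¹*B⁻¹*A⁻¹) * (A*B*A*B) * ((B*A*B*A)⁻¹ * (B*A*B⁻¹*A⁻¹*B⁻¹*A⁻¹)⁻¹))
    · group; try rw [zpow_two]
    · rw [hab]; group
  · group
  · -- relator 7 : conjugate of r⁻¹ by b
    trans (B * (B*A*B*A) * ((A*B*A*B)⁻¹ * B⁻¹))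
    · group; try rw [zpow_two]
    · rw [← hab]; group
  · -- relator 8 : product of two conjugates of r⁻¹
    trans (((A⁻¹*B⁻¹*A⁻¹) * (B*A*B*A) * ((A*B*A*B)⁻¹ * (A⁻¹*B⁻¹*A⁻¹)⁻¹)) *
      ((B*A⁻¹*B⁻¹*A⁻¹*A⁻¹*B⁻¹*A⁻¹*B⁻¹) * (B*A*B*A) *
        ((A*B*A*B)⁻¹ * (B*A⁻¹*B⁻¹*A⁻¹*A⁻¹*B⁻¹*A⁻¹*B⁻¹)⁻¹)))
    · group; try rw [zpow_two]
    · rw [← hab]; group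
  · -- relator 9 : the relation itself
    trans ((A*B*A*B) * (B*A*B*A)⁻¹)
    · group; try rw [zpow_two]
    · rw [hab]; group
  · -- relator 10 : conjugate of r⁻¹ by b
    trans (B * (B*A*B*A) * ((A*B*A*B)⁻¹ * B⁻¹))
    · group; try rw [zpow_two]
    · rw [← hab]; group

lemma hg : ∀ r ∈ rels', FreeGroup.lift g r = 1 := by
  intro r hr
  simp only [rels', Set.mem_singleton_iff] at hr
  subst hr
  have h : PresentedGroup.mk rels ((x 2 * x 4) ^ 2 * ((x 4 * x 2) ^ 2)⁻¹) = 1 :=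
    mk_rel_eq_one (by simp [rels])
  simp only [x, sq, map_mul, map_inv, mk_of] at h
  simpa only [sq, map_mul, map_inv, FreeGroup.lift_apply_of, g] using h

theorem presentation_iso :
    Nonempty (PresentedGroup rels ≃* PresentedGroup rels') := by
  -- relations in the source group
  have e1 : (PresentedGroup.of 4 : PresentedGroup rels) * .of 3 * .of 2 * .of 1 * .of 0 = 1 := by
    have h := mk_rel_eq_one (rs := rels) (r := x 4 * x 3 * x 2 * x 1 * x 0) (by simp [rels])
    simpa only [x, map_mul, mk_of] using h
  have e2 : (PresentedGroup.of 3 : PresentedGroup rels) = .of 4 := by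
    have h := mk_rel_eq_one (rs := rels) (r := x 3 * (x 4)⁻¹) (by simp [rels])
    simp only [x, map_mul, map_inv, mk_of] at h
    exact mul_inv_eq_one.mp h
  have e6 : (PresentedGroup.of 1 : PresentedGroup rels) = .of 4 * .of 2 * (.of 4)⁻¹ := by
    have h := mk_rel_eq_one (rs := rels) (r := x 1 * (x 4 * x 2 * (x 4)⁻¹)⁻¹) (by simp [rels])
    simp only [x, map_mul, map_inv, mk_of] at h
    exact mul_inv_eq_one.mp h
  have e0 : (PresentedGroup.of 0 : PresentedGroup rels) =
      (PresentedGroup.of 1 : PresentedGroup rels)⁻¹ * (.of 2)⁻¹ * (.of 3)⁻¹ * (.of 4)⁻¹ := by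
    apply mul_left_cancel (a := (PresentedGroup.of 4 : PresentedGroup rels) * .of 3 * .of 2 * .of 1)
    rw [show (PresentedGroup.of 4 : PresentedGroup rels) * .of 3 * .of 2 * .of 1 * .of 0 = 1
      from e1]
    group
  let Φ : PresentedGroup rels →* PresentedGroup rels' := PresentedGroup.toGroup hf
  let Ψ : PresentedGroup rels' →* PresentedGroup rels := PresentedGroup.toGroup hg
  have hΨΦ : Ψ.comp Φ = MonoidHom.id _ := by
    apply PresentedGroup.ext
    intro i
    rcases fin5_cases i with rfl | rfl | rfl | rfl | rfl <;>
      simp only [MonoidHom.comp_apply, MonoidHom.id_apply, Φ, Ψ, PresentedGroup.toGroup.of,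
        f, map_mul, map_inv, g]
    · rw [e0, e2, e6]; group
    · exact e6.symm
    · exact e2.symm
  have hΦΨ : Φ.comp Ψ = MonoidHom.id _ := by
    apply PresentedGroup.ext
    intro i
    rcases fin2_cases i with rfl | rfl <;>
      simp only [MonoidHom.comp_apply, MonoidHom.id_apply, Φ, Ψ, PresentedGroup.toGroup.of,
        f, map_mul, map_inv, g]
  exact ⟨{ toFun := Φ, invFun := Ψ,
           left_inv := fun z => DFunLike.congr_fun hΨΦ z,
           right_inv := fun z => DFunLike.congr_fun hΦΨ z,
           map_mul' := Φ.map_mul }⟩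

end Stmt3
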